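/- arXiv:1905.04465 — 11 statements merged into one kernel-verified Lean document; each statement's English description precedes it below -/
import Mathlib

section
/- For all natural numbers m, n, k, the number of subsets S of the disjoint union X = Y ⊔ (X_1 ⊔ ... ⊔ X_n), where |Y| = m and each block X_j has size 2, such that |S| = n + k and S intersects every block X_j (j = 1,...,n), equals C(m,n,k). Formally: the number of subsets S of Fin m ⊕ (Fin n × Fin 2) with |S| = n + k such that for every j : Fin n there exists b : Fin 2 with inr (j,b) ∈ S, equals C(m,n,k). -/
open Finset

/-- The set of ternary words of length `m + n` (as functions `Fin (m+n) → Fin 3`)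
having exactly `k` letters equal to `2` and no letter equal to `0` among the
first `m` letters. -/
def ternaryWords (m n k : ℕ) : Finset (Fin (m + n) → Fin 3) :=
  univ.filter fun w =>
    (univ.filter fun i => w i = 2).card = k ∧ ∀ i : Fin (m + n), (i : ℕ) < m → w i ≠ 0

/-- `C m n k` is the number of ternary words of length `m + n` with exactly `k`
twos and no zero among the first `m` letters; it equals the inset number
`{m,n choose k}` of Janjić–Petković. -/
def C (m n k : ℕ) : ℕ := (ternaryWords m n k).card

/-!
Read a set `S` as a word: a letter of the `m`-block is `2` if it lies in `S` and `1` otherwise,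
and the letter of a 2-block is `0`, `1` or `2` according as `S` meets it in `{0}`, `{1}` or
both. Every 2-block contributes one element to `S`, plus one more exactly when its letter is
`2`, so `|S| = n + (number of 2s)`.
-/

def blockSet : Fin 3 → Finset (Fin 2) := ![{0}, {1}, univ]

lemma blockSet_injective : Function.Injective blockSet := by decide

lemma blockSet_nonempty (v : Fin 3) : (blockSet v).Nonempty := by
  fin_cases v <;> simp [blockSet]

lemma exists_blockSet_eq (s : Finset (Fin 2)) (hs : s.Nonempty) : ∃ v, blockSet v = s := by
  revert s; decide

lemma card_blockSet (v : Fin 3) : #(blockSet v) = 1 + if v = 2 then 1 else 0 := by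
  fin_cases v <;> rfl

variable {m n : ℕ}

def wordSet (w : Fin (m + n) → Fin 3) : Finset (Fin m ⊕ Fin n × Fin 2) :=
  ({i | w (Fin.castAdd n i) = 2} : Finset (Fin m)).disjSum
    {p : Fin n × Fin 2 | p.2 ∈ blockSet (w (Fin.natAdd m p.1))}

lemma inl_mem_wordSet (w : Fin (m + n) → Fin 3) (i : Fin m) :
    Sum.inl i ∈ wordSet w ↔ w (Fin.castAdd n i) = 2 := by
  simp [wordSet]

lemma inr_mem_wordSet (w : Fin (m + n) → Fin 3) (j : Fin n) (b : Fin 2) :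
    Sum.inr (j, b) ∈ wordSet w ↔ b ∈ blockSet (w (Fin.natAdd m j)) := by
  simp [wordSet]

lemma card_wordSet (w : Fin (m + n) → Fin 3) :
    #(wordSet w) = n + #{i | w i = 2} := by
  simp only [wordSet, card_disjSum, card_filter, Fintype.sum_prod_type, Fin.sum_univ_add]
  have hblock (j : Fin n) :
      ∑ b : Fin 2, (if b ∈ blockSet (w (Fin.natAdd m j)) then 1 else 0)
        = 1 + if w (Fin.natAdd m j) = 2 then 1 else 0 := by
    rw [sum_boole, filter_univ_mem, Nat.cast_id, card_blockSet]
  simp only [hblock, sum_add_distrib, sum_const, card_univ, Fintype.card_fin, smul_eq_mul,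
    mul_one]
  ring

lemma exists_inr_mem_wordSet (w : Fin (m + n) → Fin 3) (j : Fin n) :
    ∃ b : Fin 2, Sum.inr (j, b) ∈ wordSet w := by
  simp only [inr_mem_wordSet]
  exact blockSet_nonempty _

lemma injOn_wordSet :
    Set.InjOn (wordSet (m := m) (n := n)) {w | ∀ i : Fin (m + n), (i : ℕ) < m → w i ≠ 0} := by
  intro w hw w' hw' h
  refine funext (Fin.addCases (fun i => ?_) (fun j => ?_))
  · have key : ∀ v v' : Fin 3, v ≠ 0 → v' ≠ 0 → (v = 2 ↔ v' = 2) → v = v' := by decide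
    exact key _ _ (hw _ i.isLt) (hw' _ i.isLt) (by rw [← inl_mem_wordSet, h, inl_mem_wordSet])
  · refine blockSet_injective (Finset.ext fun b => ?_)
    rw [← inr_mem_wordSet, ← inr_mem_wordSet, h]

lemma exists_wordSet_eq (S : Finset (Fin m ⊕ Fin n × Fin 2))
    (hS : ∀ j : Fin n, ∃ b : Fin 2, Sum.inr (j, b) ∈ S) :
    ∃ w : Fin (m + n) → Fin 3, (∀ i : Fin (m + n), (i : ℕ) < m → w i ≠ 0) ∧ wordSet w = S := by
  choose v hv using fun j => exists_blockSet_eq {b | Sum.inr (j, b) ∈ S} <| by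
    obtain ⟨b, hb⟩ := hS j
    exact ⟨b, by simpa using hb⟩
  refine ⟨Fin.append (fun i => if Sum.inl i ∈ S then 2 else 1) v, fun i hi => ?_, ?_⟩
  · rw [show i = Fin.castAdd n ⟨i, hi⟩ from rfl, Fin.append_left]
    split <;> decide
  · ext (i | ⟨j, b⟩)
    · rw [inl_mem_wordSet, Fin.append_left]
      split <;> simp_all
    · rw [inr_mem_wordSet, Fin.append_right, hv, mem_filter]
      simp

/-- The number of `(n+k)`-subsets of a set consisting of one block of size `m`
and `n` blocks of size `2` that intersect each block of size `2` equals
`C m n k`. -/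
theorem stmt_0 (m n k : ℕ) :
    ((univ : Finset (Finset (Fin m ⊕ Fin n × Fin 2))).filter fun S =>
        S.card = n + k ∧ ∀ j : Fin n, ∃ b : Fin 2, Sum.inr (j, b) ∈ S).card
      = C m n k := by
  refine (card_nbij wordSet (fun w hw => ?_) (injOn_wordSet.mono fun w hw => ?_)
    fun S hS => ?_).symm
  · obtain ⟨-, htwos, -⟩ := mem_filter.mp hw
    exact mem_filter.mpr ⟨mem_univ _, by rw [card_wordSet, htwos], exists_inr_mem_wordSet w⟩
  · exact (mem_filter.mp hw).2.2
  · obtain ⟨hcard, hmeets⟩ := (mem_filter.mp hS).2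
    obtain ⟨w, hw, rfl⟩ := exists_wordSet_eq S hmeets
    rw [card_wordSet, Nat.add_left_cancel_iff] at hcard
    exact ⟨w, mem_filter.mpr ⟨mem_univ w, hcard, hw⟩, rfl⟩
end

section
/- For all natural numbers m, n, k, one has (as integers) C(m,n,k) = Σ_{i=0}^{n} (-1)^i · binom(n,i) · binom(m + 2n - 2i, n + k). -/
/-!
Marking every letter `2` by `X`, the words are counted by the coefficient of `X ^ k` in
`(1 + X) ^ m * (2 + X) ^ n`: a letter of the prefix contributes `1 + X`, a free letter `2 + X`.
Since `X * (2 + X) = (1 + X) ^ 2 - 1`, this is the coefficient of `X ^ (n + k)` in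
`(1 + X) ^ m * ((1 + X) ^ 2 - 1) ^ n`, and the binomial theorem expands it into the alternating sum.
-/

open Finset

open scoped Polynomial

open Polynomial in
theorem card_filter_piFinset_count_eq_coeff {ι α R : Type*} [Fintype ι] [DecidableEq ι]
    [DecidableEq α] [CommSemiring R] (A : ι → Finset α) (a : α) (k : ℕ) :
    (#{w ∈ Fintype.piFinset A | #{i | w i = a} = k} : R) =
      (∏ i, ∑ v ∈ A i, (X : R[X]) ^ (if v = a then 1 else 0)).coeff k := by
  rw [prod_univ_sum, finsetSum_coeff]
  simp_rw [prod_pow_eq_pow_sum, ← card_filter, coeff_X_pow, ← sum_boole, eq_comm]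

def allowedLetters (m n : ℕ) (i : Fin (m + n)) : Finset (Fin 3) :=
  if (i : ℕ) < m then {1, 2} else univ

theorem ternaryWords_eq_filter_piFinset (m n k : ℕ) :
    ternaryWords m n k = {w ∈ Fintype.piFinset (allowedLetters m n) | #{i | w i = 2} = k} := by
  ext w
  simp only [ternaryWords, mem_filter, mem_univ, true_and, Fintype.mem_piFinset, and_comm]
  refine and_congr_right' (forall_congr' fun i => ?_)
  by_cases hi : (i : ℕ) < m
  · simp only [allowedLetters, hi, if_true, mem_insert, mem_singleton, forall_const]
    omega
  · simp [allowedLetters, hi]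

open Polynomial in
theorem prod_sum_allowedLetters {R : Type*} [CommSemiring R] (m n : ℕ) :
    ∏ i, ∑ v ∈ allowedLetters m n i, (X : R[X]) ^ (if v = 2 then 1 else 0) =
      (1 + X) ^ m * (2 + X) ^ n := by
  rw [Fin.prod_univ_add]
  simp [allowedLetters, Fin.sum_univ_three, one_add_one_eq_two]

open Polynomial (X) in
theorem C_eq_coeff {R : Type*} [CommSemiring R] (m n k : ℕ) :
    (C m n k : R) = ((1 + X) ^ m * (2 + X) ^ n : R[X]).coeff k := by
  rw [C, ternaryWords_eq_filter_piFinset, card_filter_piFinset_count_eq_coeff,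
    prod_sum_allowedLetters]

open Polynomial in
theorem coeff_one_add_X_pow_mul_two_add_X_pow {R : Type*} [CommRing R] (m n k : ℕ) :
    ((1 + X) ^ m * (2 + X) ^ n : R[X]).coeff k =
      ∑ i ∈ range (n + 1), (-1 : R) ^ i * (n.choose i) * ((m + 2 * n - 2 * i).choose (n + k)) := by
  have hshift : ((1 + X) ^ m * (2 + X) ^ n * X ^ n : R[X]) =
      ∑ i ∈ range (n + 1), C ((-1) ^ i * (n.choose i : R)) * (1 + X) ^ (m + 2 * n - 2 * i) := by
    have : ((2 + X) * X : R[X]) = -1 + (1 + X) ^ 2 := by ring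
    rw [mul_assoc, ← mul_pow, this, add_pow (-1 : R[X]), mul_sum]
    refine sum_congr rfl fun i hi => ?_
    have hi : i ≤ n := Nat.lt_succ_iff.mp (mem_range.mp hi)
    rw [show m + 2 * n - 2 * i = m + 2 * (n - i) by omega, pow_add, pow_mul]
    simp only [map_mul, map_pow, map_neg, map_one, map_natCast]
    ring
  rw [← coeff_mul_X_pow _ n k, hshift, finsetSum_coeff]
  simp_rw [coeff_C_mul, coeff_one_add_X_pow, add_comm k n]

theorem stmt_1 (m n k : ℕ) :
    (C m n k : ℤ) =
      ∑ i ∈ Finset.range (n + 1),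
        (-1 : ℤ) ^ i * (n.choose i) * ((m + 2 * n - 2 * i).choose (n + k)) := by
  rw [C_eq_coeff, coeff_one_add_X_pow_mul_two_add_X_pow]
end

section
/- For all natural numbers m, n, k, one has 2^k · C(m,n,k) = Σ_{i=0}^{m} 2^{n+i} · binom(m,i) · binom(n, k-i) (equivalently, C(m,n,k) = 2^{n-k} Σ_{i=0}^{m} 2^i binom(m,i) binom(n,k-i)). -/
open Finset

def cnt {N : ℕ} (w : Fin N → Fin 3) : ℕ := (univ.filter fun i => w i = 2).card

lemma cnt_cons {n : ℕ} (a : Fin 3) (v : Fin n → Fin 3) :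
    cnt (Fin.cons a v) = (if a = 2 then 1 else 0) + cnt v := by
  simp only [cnt, Finset.card_filter, Fin.sum_univ_succ, Fin.cons_zero, Fin.cons_succ]

lemma sum_succ_fn {M : Type*} [AddCommMonoid M] {n : ℕ} (F : (Fin (n+1) → Fin 3) → M) :
    ∑ w : Fin (n+1) → Fin 3, F w
      = ∑ a : Fin 3, ∑ v : Fin n → Fin 3, F (Fin.cons a v) := by
  rw [show (∑ a : Fin 3, ∑ v : Fin n → Fin 3, F (Fin.cons a v))
      = ∑ p : Fin 3 × (Fin n → Fin 3), F (Fin.cons p.1 p.2) from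
    (Fintype.sum_prod_type' _).symm]
  exact (Fintype.sum_equiv (Fin.consEquiv fun _ => Fin 3) _ _ (fun p => rfl)).symm

lemma B_card (n j : ℕ) :
    ((univ : Finset (Fin n → Fin 3)).filter fun v => cnt v = j).card
      = n.choose j * 2 ^ (n - j) := by
  induction n generalizing j with
  | zero =>
    cases j with
    | zero => simp [cnt]
    | succ j => simp [cnt, Finset.filter_eq_empty_iff]
  | succ n ih =>
    rw [Finset.card_filter, sum_succ_fn, Fin.sum_univ_three]
    simp only [cnt_cons]
    norm_num
    simp only [show (if (0:Fin 3) = 2 then 1 else 0) = 0 from by decide,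
      show (if (1:Fin 3) = 2 then 1 else 0) = 0 from by decide, zero_add]
    cases j with
    | zero =>
      rw [show (Finset.filter (fun x : Fin n → Fin 3 => 1 + cnt x = 0) Finset.univ) = ∅ from
        Finset.filter_false_of_mem (fun x _ => by omega)]
      simp [ih 0, Nat.pow_succ]
      ring
    | succ j =>
      simp only [show ∀ c : ℕ, (1 + c = j + 1) ↔ (c = j) from fun c => by omega]
      rw [ih j, ih (j+1), Nat.choose_succ_succ, Nat.succ_sub_succ]
      rcases le_or_gt (j+1) n with h | h
      · rw [show n - j = (n - (j+1)) + 1 from by omega, pow_succ]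
        ring
      · rw [Nat.choose_eq_zero_of_lt h]
        ring

lemma A_card (m i : ℕ) :
    ((univ : Finset (Fin m → Fin 3)).filter fun u => cnt u = i ∧ ∀ x, u x ≠ 0).card
      = m.choose i := by
  induction m generalizing i with
  | zero =>
    cases i with
    | zero => simp [cnt]
    | succ i => simp [cnt, Finset.filter_eq_empty_iff]
  | succ m ih =>
    rw [Finset.card_filter, sum_succ_fn, Fin.sum_univ_three]
    simp only [cnt_cons, Fin.forall_fin_succ, Fin.cons_zero, Fin.cons_succ]
    simp only [show ((0:Fin 3) ≠ 0) = False from by simp,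
      show ((1:Fin 3) ≠ 0) = True from by decide,
      show ((2:Fin 3) ≠ 0) = True from by decide,
      show (if (0:Fin 3) = 2 then 1 else 0) = 0 from by decide,
      show (if (1:Fin 3) = 2 then 1 else 0) = 0 from by decide,
      show (if (2:Fin 3) = 2 then 1 else 0) = 1 from by decide,
      false_and, and_false, if_false, true_and, zero_add]
    norm_num [← Finset.card_filter]
    cases i with
    | zero =>
      simp only [show ∀ c : ℕ, (1 + c = 0) ↔ False from fun c => by simp, false_and,
        Finset.filter_false, Finset.card_empty, add_zero]
      rw [ih 0]
      simp
    | succ i =>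
      simp only [show ∀ c : ℕ, (1 + c = i + 1) ↔ (c = i) from fun c => by omega]
      rw [ih i, ih (i+1), Nat.choose_succ_succ]
      simp only [Nat.succ_eq_add_one]
      omega

lemma C_split (m n k : ℕ) :
    C m n k = ∑ u : Fin m → Fin 3, ∑ v : Fin n → Fin 3,
      if (cnt u + cnt v = k ∧ ∀ x, u x ≠ 0) then 1 else 0 := by
  classical
  have hE : ∀ (u : Fin m → Fin 3) (v : Fin n → Fin 3),
      ((Equiv.sumArrowEquivProdArrow (Fin m) (Fin n) (Fin 3)).symm.trans
        (Equiv.arrowCongr finSumFinEquiv (Equiv.refl (Fin 3)))) (u, v)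
      = fun i => Sum.elim u v (finSumFinEquiv.symm i) := by
    intro u v; rfl
  rw [C, ternaryWords, Finset.card_filter]
  rw [show (∑ u : Fin m → Fin 3, ∑ v : Fin n → Fin 3,
        if (cnt u + cnt v = k ∧ ∀ x, u x ≠ 0) then 1 else 0)
      = ∑ p : (Fin m → Fin 3) × (Fin n → Fin 3),
        if (cnt p.1 + cnt p.2 = k ∧ ∀ x, p.1 x ≠ 0) then 1 else 0 from
    (Fintype.sum_prod_type' _).symm]
  refine (Fintype.sum_equiv
    (((Equiv.sumArrowEquivProdArrow (Fin m) (Fin n) (Fin 3)).symm.trans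
        (Equiv.arrowCongr finSumFinEquiv (Equiv.refl (Fin 3))))) _ _ ?_).symm
  rintro ⟨u, v⟩
  rw [hE]
  have h1 : (Finset.filter (fun i : Fin (m+n) => Sum.elim u v (finSumFinEquiv.symm i) = 2)
      Finset.univ).card = cnt u + cnt v := by
    have key := Fintype.sum_equiv (finSumFinEquiv (m := m) (n := n))
      (fun s => if Sum.elim u v s = 2 then (1:ℕ) else 0)
      (fun i => if Sum.elim u v (finSumFinEquiv.symm i) = 2 then (1:ℕ) else 0)
      (fun s => by simp)
    rw [Finset.card_filter, ← key, Fintype.sum_sum_type]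
    simp only [Sum.elim_inl, Sum.elim_inr, cnt, Finset.card_filter]
    rfl
  have h2 : (∀ i : Fin (m+n), (i : ℕ) < m → Sum.elim u v (finSumFinEquiv.symm i) ≠ 0)
      ↔ ∀ a : Fin m, u a ≠ 0 := by
    constructor
    · intro h a
      have := h (Fin.castAdd n a) a.isLt
      rwa [finSumFinEquiv_symm_apply_castAdd, Sum.elim_inl] at this
    · intro h i hi
      have : i = Fin.castAdd n ⟨(i : ℕ), hi⟩ := by ext; rfl
      rw [this, finSumFinEquiv_symm_apply_castAdd, Sum.elim_inl]
      exact h _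
  exact if_congr (and_congr (by rw [h1]) h2.symm) rfl rfl

lemma cnt_le {m : ℕ} (u : Fin m → Fin 3) : cnt u ≤ m :=
  (Finset.card_filter_le _ _).trans (by simp)

lemma step1 (m n k : ℕ) : C m n k = ∑ j ∈ Finset.range (m+1),
    m.choose j * (if j ≤ k then n.choose (k-j) * 2 ^ (n-(k-j)) else 0) := by
  rw [C_split]
  have inner : ∀ u : Fin m → Fin 3,
      (∑ v : Fin n → Fin 3, if (cnt u + cnt v = k ∧ ∀ x, u x ≠ 0) then 1 else 0)
      = if (∀ x, u x ≠ 0) then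
          (if cnt u ≤ k then n.choose (k - cnt u) * 2 ^ (n-(k - cnt u)) else 0) else 0 := by
    intro u
    by_cases hP : ∀ x, u x ≠ 0
    · rw [if_pos hP]
      by_cases hle : cnt u ≤ k
      · rw [if_pos hle, ← B_card n (k - cnt u), Finset.card_filter]
        refine Finset.sum_congr rfl fun v _ => if_congr ?_ rfl rfl
        constructor
        · rintro ⟨h, -⟩; omega
        · intro h; exact ⟨by omega, hP⟩
      · rw [if_neg hle]
        refine Finset.sum_eq_zero fun v _ => if_neg ?_
        rintro ⟨h, -⟩; omega
    · rw [if_neg hP]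
      refine Finset.sum_eq_zero fun v _ => if_neg ?_
      rintro ⟨-, h⟩; exact hP h
  simp only [inner]
  rw [← Finset.sum_fiberwise_of_maps_to
    (fun u _ => Finset.mem_range_succ_iff.mpr (cnt_le u))]
  refine Finset.sum_congr rfl fun j hj => ?_
  have hcongr : ∀ u ∈ Finset.univ.filter (fun u : Fin m → Fin 3 => cnt u = j),
      (if (∀ x, u x ≠ 0) then
          (if cnt u ≤ k then n.choose (k - cnt u) * 2 ^ (n-(k - cnt u)) else 0) else 0)
      = if (∀ x, u x ≠ 0) then
          (if j ≤ k then n.choose (k - j) * 2 ^ (n-(k - j)) else 0) else 0 := by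
    intro u hu
    rw [(Finset.mem_filter.mp hu).2]
  rw [Finset.sum_congr rfl hcongr, ← Finset.sum_filter, Finset.filter_filter,
    Finset.sum_const, smul_eq_mul, A_card]

theorem stmt_2 (m n k : ℕ) :
    2 ^ k * C m n k =
      ∑ i ∈ Finset.range (m + 1),
        2 ^ (n + i) * m.choose i * (if i ≤ k then n.choose (k - i) else 0) := by
  rw [step1, Finset.mul_sum]
  refine Finset.sum_congr rfl fun j hj => ?_
  by_cases h : j ≤ k
  · rw [if_pos h, if_pos h]
    rcases le_or_gt (k - j) n with h2 | h2
    · rw [show n + j = k + (n - (k - j)) from by omega, pow_add]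
      ring
    · rw [Nat.choose_eq_zero_of_lt h2]
      ring
  · rw [if_neg h, if_neg h]
    ring
end

section
/- For all natural numbers m, n, k, one has C(m, n+1, k) = C(m, n, k) + C(m+1, n, k). -/
open Finset

lemma card_filter_cast' {a b : ℕ} (h : a = b) (w : Fin b → Fin 3) :
    (univ.filter fun i : Fin a => w (Fin.cast h i) = 2).card
      = (univ.filter fun j : Fin b => w j = 2).card := by
  subst h; simp

lemma card_filter_succAbove' {N : ℕ} (p : Fin (N+1)) (w : Fin (N+1) → Fin 3)
    (hwp : w p ≠ 2) :
    (univ.filter fun i : Fin N => w (p.succAbove i) = 2).card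
      = (univ.filter fun j : Fin (N+1) => w j = 2).card := by
  apply Finset.card_bij (fun i _ => p.succAbove i)
  · intro i hi; simp only [mem_filter, mem_univ, true_and] at hi ⊢; exact hi
  · intro a _ b _ hab; exact p.succAbove_right_injective hab
  · intro j hj
    simp only [mem_filter, mem_univ, true_and] at hj
    have hne : j ≠ p := by rintro rfl; exact hwp hj
    obtain ⟨i, rfl⟩ := Fin.exists_succAbove_eq hne
    exact ⟨i, by simp [hj], rfl⟩

lemma insertNth_succAbove3 {N : ℕ} (p : Fin (N+1)) (x : Fin 3) (w : Fin N → Fin 3)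
    (i : Fin N) : p.insertNth (α := fun _ => Fin 3) x w (p.succAbove i) = w i :=
  Fin.insertNth_apply_succAbove (α := fun _ => Fin 3) p x w i

lemma insertNth_same3 {N : ℕ} (p : Fin (N+1)) (x : Fin 3) (w : Fin N → Fin 3) :
    p.insertNth (α := fun _ => Fin 3) x w p = x :=
  Fin.insertNth_apply_same (α := fun _ => Fin 3) p x w

set_option maxHeartbeats 2000000 in
theorem stmt_3 (m n k : ℕ) :
    C m (n + 1) k = C m n k + C (m + 1) n k := by
  classical
  obtain ⟨p, hp⟩ : ∃ p : Fin (m + (n+1)), (p : ℕ) = m := ⟨⟨m, by omega⟩, rfl⟩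
  have part1 : ((ternaryWords m (n+1) k).filter (fun w => w p = 0)).card = C m n k := by
    apply Finset.card_nbij' (fun w => w ∘ p.succAbove) (fun w => p.insertNth 0 w)
    · intro w hw
      simp only [mem_coe, mem_filter, ternaryWords, mem_univ, true_and] at hw ⊢
      obtain ⟨⟨hcount, hzero⟩, hp0⟩ := hw
      refine ⟨(card_filter_succAbove' p w (by rw [hp0]; decide)).trans hcount, ?_⟩
      intro i hi
      have hlt : i.castSucc < p := by
        rw [Fin.lt_def, hp]
        simpa using hi
      rw [Function.comp_apply, Fin.succAbove_of_castSucc_lt _ _ hlt]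
      exact hzero _ (by simpa using hi)
    · intro w hw
      simp only [mem_coe, mem_filter, ternaryWords, mem_univ, true_and] at hw ⊢
      obtain ⟨hcount, hzero⟩ := hw
      refine ⟨⟨?_, ?_⟩, insertNth_same3 p 0 w⟩
      · have h1 := card_filter_succAbove' p (p.insertNth 0 w)
          (by rw [insertNth_same3]; decide)
        simp only [insertNth_succAbove3] at h1
        exact h1.symm.trans hcount
      · intro j hj
        have hjp : (j : ℕ) < m := hj
        have hi2 : (j : ℕ) < m + n := by omega
        set i : Fin (m+n) := ⟨(j : ℕ), hi2⟩ with hidef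
        have hlt : i.castSucc < p := by rw [Fin.lt_def, hp]; simpa using hjp
        have hji : j = p.succAbove i := by
          rw [Fin.succAbove_of_castSucc_lt _ _ hlt]
          ext; simp [hidef]
        rw [hji, insertNth_succAbove3]
        exact hzero i hjp
    · intro w hw
      simp only [mem_coe, mem_filter, ternaryWords, mem_univ, true_and] at hw
      obtain ⟨_, hp0⟩ := hw
      funext j
      rcases eq_or_ne j p with rfl | hne
      · exact (insertNth_same3 _ 0 _).trans hp0.symm
      · obtain ⟨i, rfl⟩ := Fin.exists_succAbove_eq hne
        exact insertNth_succAbove3 p 0 (w ∘ p.succAbove) i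
    · intro w _
      funext i
      exact insertNth_succAbove3 p 0 w i
  have part2 : ((ternaryWords m (n+1) k).filter (fun w => w p ≠ 0)).card = C (m+1) n k := by
    clear part1
    have h : (m+1) + n = m + (n+1) := by omega
    apply Finset.card_nbij' (fun w => fun i => w (Fin.cast h i))
      (fun w => fun i => w (Fin.cast h.symm i))
    · intro w hw
      simp only [mem_coe, mem_filter, ternaryWords, mem_univ, true_and] at hw ⊢
      obtain ⟨⟨hcount, hzero⟩, hp0⟩ := hw
      refine ⟨(card_filter_cast' h w).trans hcount, ?_⟩
      intro i hi
      rcases Nat.lt_or_ge (i : ℕ) m with h1 | h1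
      · exact hzero _ (by simpa using h1)
      · have : Fin.cast h i = p := by
          ext; simp only [Fin.coe_cast, hp]; omega
        rw [this]; exact hp0
    · intro w hw
      simp only [mem_coe, mem_filter, ternaryWords, mem_univ, true_and] at hw ⊢
      obtain ⟨hcount, hzero⟩ := hw
      refine ⟨⟨(card_filter_cast' h.symm w).trans hcount, ?_⟩, ?_⟩
      · intro i hi
        exact hzero _ (by simpa using Nat.lt_succ_of_lt hi)
      · have hcast : ((Fin.cast h.symm p : Fin ((m+1)+n)) : ℕ) < m + 1 := by
          rw [Fin.coe_cast, hp]; omega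
        exact hzero _ hcast
    · intro w _; funext i; rfl
    · intro w _; funext i; rfl
  rw [C, ← Finset.card_filter_add_card_filter_not (p := fun w => w p = 0),
    part1, part2]
end

section
/- For every natural number m, the Fibonacci number F_{m+3} (with F_1 = F_2 = 1) satisfies F_{m+3} = Σ_{i=0}^{⌊(m+1)/2⌋} C(m - i, 1, i). -/
open Finset

/-- clean version of `ternaryWords m 0 k` over `Fin m`. -/
def T0 (m k : ℕ) : Finset (Fin m → Fin 3) :=
  univ.filter fun w => (univ.filter fun i => w i = 2).card = k ∧ ∀ i : Fin m, w i ≠ 0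

lemma fin3_eq_one (x : Fin 3) (h0 : x ≠ 0) (h2 : x ≠ 2) : x = 1 := by
  fin_cases x <;> simp_all

lemma card_filter_snoc {n : ℕ} (p : Fin (n+1) → Prop) [DecidablePred p] :
    (univ.filter p).card =
      (univ.filter fun i : Fin n => p i.castSucc).card + if p (Fin.last n) then 1 else 0 := by
  simp only [Finset.card_filter]
  rw [Fin.sum_univ_castSucc]

lemma cardT0 (m k : ℕ) : (T0 m k).card = Nat.choose m k := by
  have hpc : (Finset.powersetCard k (univ : Finset (Fin m))).card = Nat.choose m k := by
    simp [Finset.card_powersetCard]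
  rw [← hpc]
  refine Finset.card_bij'
    (fun w _ => (univ.filter fun i : Fin m => w i = 2))
    (fun S _ => fun i : Fin m => if i ∈ S then (2 : Fin 3) else 1)
    ?_ ?_ ?_ ?_
  · intro w hw
    simp only [T0, Finset.mem_filter, Finset.mem_univ, true_and] at hw
    simp only [Finset.mem_powersetCard]
    exact ⟨Finset.subset_univ _, hw.1⟩
  · intro S hS
    simp only [Finset.mem_powersetCard] at hS
    simp only [T0, Finset.mem_filter, Finset.mem_univ, true_and]
    constructor
    · rw [← hS.2]
      congr 1
      ext i
      simp only [Finset.mem_filter, Finset.mem_univ, true_and]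
      constructor
      · intro h
        by_contra hi
        rw [if_neg hi] at h
        exact absurd h (by decide)
      · intro h; rw [if_pos h]
    · intro i
      by_cases h : i ∈ S
      · rw [if_pos h]; decide
      · rw [if_neg h]; decide
  · intro w hw
    simp only [T0, Finset.mem_filter, Finset.mem_univ, true_and] at hw
    funext i
    by_cases h : w i = 2
    · simp [h]
    · have h1 : w i = 1 := fin3_eq_one _ (hw.2 i) h
      simp only [Finset.mem_filter, Finset.mem_univ, true_and]
      rw [if_neg h, h1]
  · intro S hS
    ext i
    simp only [Finset.mem_filter, Finset.mem_univ, true_and]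
    by_cases h : i ∈ S
    · simp [h]
    · rw [if_neg h]
      simp [h]

lemma tern0_eq (m k : ℕ) : ternaryWords m 0 k = T0 m k := by
  ext w
  simp only [ternaryWords, T0, Finset.mem_filter, Finset.mem_univ, true_and]
  exact and_congr_right fun _ =>
    ⟨fun h i => h i i.isLt, fun h i _ => h i⟩

lemma snoc_twos_card (m : ℕ) (w' : Fin m → Fin 3) (v : Fin 3) :
    (univ.filter fun i : Fin (m+1) => Fin.snoc (α := fun _ : Fin (m+1) => Fin 3) w' v i = 2).card =
      (univ.filter fun i : Fin m => w' i = 2).card + if v = 2 then 1 else 0 := by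
  rw [Finset.card_filter, Finset.card_filter, Fin.sum_univ_castSucc]
  simp only [Fin.snoc_castSucc, Fin.snoc_last]

lemma mem_tern1 (m k : ℕ) (w : Fin (m + 1) → Fin 3) :
    w ∈ ternaryWords m 1 k ↔
      (univ.filter fun i => w i = 2).card = k ∧ ∀ i : Fin (m + 1), (i : ℕ) < m → w i ≠ 0 := by
  simp [ternaryWords]

lemma fiber_eq (m k k' : ℕ) (v : Fin 3)
    (hv : k = k' + if v = 2 then 1 else 0) :
    ((ternaryWords m 1 k).filter fun w => w (Fin.last m) = v).card = (T0 m k').card := by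
  refine Finset.card_bij'
    (fun w _ => fun i : Fin m => w i.castSucc)
    (fun w' _ => Fin.snoc w' v)
    ?_ ?_ ?_ ?_
  · intro w hw
    rw [Finset.mem_filter, mem_tern1] at hw
    obtain ⟨⟨hc, hnz⟩, hl⟩ := hw
    rw [card_filter_snoc (fun i => w i = 2)] at hc
    rw [hl] at hc
    simp only [T0, Finset.mem_filter, Finset.mem_univ, true_and]
    refine ⟨by omega, fun i => hnz i.castSucc (by simp [i.isLt])⟩
  · intro w' hw'
    simp only [T0, Finset.mem_filter, Finset.mem_univ, true_and] at hw'
    obtain ⟨hc, hnz⟩ := hw'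
    rw [Finset.mem_filter, mem_tern1]
    refine ⟨⟨?_, ?_⟩, Fin.snoc_last _ _⟩
    · rw [snoc_twos_card m w' v, hc]; omega
    · intro i hi
      have hieq : i = Fin.castSucc ⟨(i : ℕ), hi⟩ := by apply Fin.ext; simp
      rw [hieq, Fin.snoc_castSucc]
      exact hnz _
  · intro w hw
    rw [Finset.mem_filter] at hw
    funext i
    refine Fin.lastCases ?_ ?_ i
    · rw [Fin.snoc_last, hw.2]
    · intro j
      rw [Fin.snoc_castSucc]
  · intro w' _
    funext i
    exact Fin.snoc_castSucc _ _ _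

lemma fiber_2zero (m : ℕ) :
    ((ternaryWords m 1 0).filter fun w => w (Fin.last m) = 2).card = 0 := by
  rw [Finset.card_eq_zero, Finset.eq_empty_iff_forall_notMem]
  intro w hw
  rw [Finset.mem_filter, mem_tern1] at hw
  obtain ⟨⟨hc, _⟩, hl⟩ := hw
  have hm : Fin.last m ∈ univ.filter fun i => w i = 2 := by
    simp only [Finset.mem_filter, Finset.mem_univ, true_and]; exact hl
  rw [Finset.card_eq_zero] at hc
  simp [hc] at hm

set_option maxHeartbeats 1000000 in
lemma cardC1 (m k : ℕ) :
    C m 1 k = 2 * Nat.choose m k + (if k = 0 then 0 else Nat.choose m (k-1)) := by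
  have h := Finset.card_eq_sum_card_fiberwise
    (f := fun w => w (Fin.last m)) (s := ternaryWords m 1 k) (t := (univ : Finset (Fin 3)))
    (fun x _ => Finset.mem_univ _)
  rw [C, h, Fin.sum_univ_three,
    fiber_eq m k k 0 (by simp), fiber_eq m k k 1 (by simp), cardT0]
  cases k with
  | zero => rw [fiber_2zero]; simp
  | succ k =>
      rw [fiber_eq m (k+1) k 2 (by simp), cardT0]
      simp only [Nat.succ_ne_zero, if_false, Nat.succ_sub_one]
      ring

lemma fibsum (n t : ℕ) (ht : n / 2 + 1 ≤ t) :
    Nat.fib (n + 1) = ∑ i ∈ Finset.range t, Nat.choose (n - i) i := by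
  have h1 : Nat.fib (n + 1) = ∑ i ∈ Finset.range (n + 1), Nat.choose (n - i) i := by
    rw [Nat.fib_succ_eq_sum_choose, Finset.Nat.sum_antidiagonal_eq_sum_range_succ
      (f := fun a b => Nat.choose a b)]
    rw [← Finset.sum_range_reflect (fun i => Nat.choose (n - i) i) (n + 1)]
    refine Finset.sum_congr rfl fun i hi => ?_
    rw [Finset.mem_range] at hi
    congr 1 <;> omega
  have key : ∀ s : ℕ, n / 2 + 1 ≤ s →
      ∑ i ∈ Finset.range s, Nat.choose (n - i) i
        = ∑ i ∈ Finset.range (n / 2 + 1), Nat.choose (n - i) i := by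
    intro s hs
    rw [← Finset.sum_subset (Finset.range_subset_range.mpr hs)]
    intro i hi hni
    simp only [Finset.mem_range, not_lt] at hi hni
    exact Nat.choose_eq_zero_of_lt (by omega)
  rw [h1, key (n+1) (by omega), key t ht]

theorem stmt_4 (m : ℕ) :
    Nat.fib (m + 3) = ∑ i ∈ Finset.range ((m + 1) / 2 + 1), C (m - i) 1 i := by
  have hsum : ∑ i ∈ Finset.range ((m + 1) / 2 + 1), C (m - i) 1 i
      = (∑ i ∈ Finset.range ((m + 1) / 2 + 1), 2 * Nat.choose (m - i) i)
        + ∑ i ∈ Finset.range ((m + 1) / 2 + 1),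
            (if i = 0 then 0 else Nat.choose (m - i) (i - 1)) := by
    rw [← Finset.sum_add_distrib]
    exact Finset.sum_congr rfl fun i _ => cardC1 (m - i) i
  rw [hsum, ← Finset.mul_sum]
  have h1 : ∑ i ∈ Finset.range ((m + 1) / 2 + 1), Nat.choose (m - i) i = Nat.fib (m + 1) :=
    (fibsum m _ (by omega)).symm
  have h2 : ∑ i ∈ Finset.range ((m + 1) / 2 + 1),
      (if i = 0 then 0 else Nat.choose (m - i) (i - 1)) = Nat.fib m := by
    rw [Finset.sum_range_succ']
    simp only [Nat.succ_ne_zero, if_false, if_pos, Nat.add_sub_cancel, add_zero]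
    rcases Nat.eq_zero_or_pos m with hm | hm
    · subst hm; norm_num
    · have := fibsum (m - 1) ((m+1)/2) (by omega)
      rw [Nat.sub_add_cancel hm] at this
      rw [this]
      exact Finset.sum_congr rfl fun i _ => by congr 1; omega
  rw [h1, h2]
  have e1 : Nat.fib (m + 3) = Nat.fib (m + 1) + Nat.fib (m + 2) := Nat.fib_add_two (n := m + 1)
  have e2 : Nat.fib (m + 2) = Nat.fib m + Nat.fib (m + 1) := Nat.fib_add_two (n := m)
  omega
end

section
/- For all natural numbers m, n, k, one has C(m, n+1, k+1) = 2·C(m, n, k+1) + C(m, n, k). -/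
/-!
Split a word of length `m + n + 1` into its first `m + n` letters and its last letter. The last
position lies beyond the first `m`, so it may hold any letter: `0` or `1` leave the number of
twos unchanged, while `2` adds one, giving `C m n (k + 1) + C m n (k + 1) + C m n k`.
-/

open Finset

namespace Fin

variable {α : Type*} {N : ℕ}

theorem card_eq_sum_card_snoc_mem [Fintype α] [DecidableEq α] (S : Finset (Fin (N + 1) → α)) :
    #S = ∑ a : α, #{w : Fin N → α | (snoc w a : Fin (N + 1) → α) ∈ S} := by
  conv_lhs => rw [← filter_univ_mem S]
  simp only [card_filter]
  rw [← (snocEquiv fun _ => α).sum_comp, Fintype.sum_prod_type]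
  rfl

theorem card_filter_snoc_eq [DecidableEq α] (w : Fin N → α) (a b : α) :
    #{i | (snoc w a : Fin (N + 1) → α) i = b} = #{i | w i = b} + if a = b then 1 else 0 := by
  simp only [card_filter, sum_univ_castSucc, snoc_castSucc, snoc_last]

theorem forall_lt_snoc_iff {m : ℕ} (hm : m ≤ N) (p : α → Prop) (w : Fin N → α) (a : α) :
    (∀ i : Fin (N + 1), (i : ℕ) < m → p ((snoc w a : Fin (N + 1) → α) i)) ↔
      ∀ i : Fin N, (i : ℕ) < m → p (w i) := by
  rw [forall_fin_succ']
  simp only [val_castSucc, snoc_castSucc, val_last, snoc_last]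
  exact and_iff_left fun h => absurd h (by omega)

end Fin

theorem snoc_mem_ternaryWords_iff {m n k : ℕ} (w : Fin (m + n) → Fin 3) (a : Fin 3) :
    (Fin.snoc w a : Fin (m + n + 1) → Fin 3) ∈ ternaryWords m (n + 1) k ↔
      #{i | w i = 2} + (if a = 2 then 1 else 0) = k ∧ ∀ i : Fin (m + n), (i : ℕ) < m → w i ≠ 0 := by
  rw [ternaryWords, mem_filter, and_iff_right (mem_univ _)]
  exact and_congr (Eq.congr_left (Fin.card_filter_snoc_eq w a 2))
    (Fin.forall_lt_snoc_iff (Nat.le_add_right m n) (· ≠ 0) w a)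

theorem stmt_5 (m n k : ℕ) :
    C m (n + 1) (k + 1) = 2 * C m n (k + 1) + C m n k := by
  rw [C, Fin.card_eq_sum_card_snoc_mem, Fin.sum_univ_three]
  simp only [snoc_mem_ternaryWords_iff, Fin.reduceEq, ↓reduceIte, add_zero,
    Nat.add_right_cancel_iff]
  rw [two_mul]
  rfl
end

section
/- For all natural numbers m, n, k and every natural number p with p ≤ m, one has (as integers) C(m+1, n, k) = Σ_{i=0}^{p} (-1)^i · binom(p,i) · C(m+1-p, n+p-i, k). -/
open Finset

lemma card_filter_equiv {α β : Type*} [Fintype α] [Fintype β] [DecidableEq α] [DecidableEq β]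
    (e : α ≃ β) (P : β → Prop) [DecidablePred P] :
    (univ.filter fun a => P (e a)).card = (univ.filter P).card := by
  apply Finset.card_bij (fun a _ => e a)
  · intro a ha; simp at ha ⊢; exact ha
  · intro a _ b _ h; exact e.injective h
  · intro b hb; simp at hb; exact ⟨e.symm b, by simp [hb], by simp⟩

lemma card_filter_succAbove {N : ℕ} (M : Fin (N+1)) (w : Fin (N+1) → Fin 3) (hM : w M ≠ 2) :
    (univ.filter fun s => w s = 2).card = (univ.filter fun t => w (M.succAbove t) = 2).card := by
  symm
  apply Finset.card_bij (fun t _ => M.succAbove t)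
  · intro t ht; simp at ht ⊢; exact ht
  · intro a _ b _ h; exact Fin.succAbove_right_injective h
  · intro s hs
    simp at hs
    obtain ⟨t, rfl⟩ := Fin.exists_succAbove_eq (show s ≠ M from fun h => hM (h ▸ hs))
    exact ⟨t, by simp [hs]⟩

lemma succAbove_val {N m : ℕ} (hm : m < N + 1) (t : Fin N) :
    (((⟨m, hm⟩ : Fin (N+1)).succAbove t : ℕ)) = if (t : ℕ) < m then (t : ℕ) else (t : ℕ) + 1 := by
  rw [Fin.succAbove]
  split_ifs with h1 h2 h2
  · rfl
  · exact absurd (by simpa [Fin.lt_def] using h1) h2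
  · exact absurd (show t.castSucc < ⟨m, hm⟩ by simpa [Fin.lt_def] using h2) h1
  · rfl

lemma C_rec (m n k : ℕ) : C m (n+1) k = C (m+1) n k + C m n k := by
  classical
  have hcast : (m+1)+n = m+(n+1) := by omega
  set M : Fin (m + (n+1)) := ⟨m, by omega⟩ with hMdef
  rw [C, ← Finset.card_filter_add_card_filter_not
    (s := ternaryWords m (n+1) k) (p := fun w => w M ≠ 0)]
  congr 1
  · -- words with w M ≠ 0  ↔  ternaryWords (m+1) n k
    refine Finset.card_nbij' (fun w => w ∘ finCongr hcast)
      (fun v => v ∘ (finCongr hcast).symm) ?_ ?_ ?_ ?_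
    · intro w hw
      simp only [mem_coe, mem_filter, ternaryWords, mem_univ, true_and] at hw ⊢
      obtain ⟨⟨hcard, hzero⟩, hne⟩ := hw
      refine ⟨?_, ?_⟩
      · rw [Function.comp_def, card_filter_equiv (finCongr hcast) (fun j => w j = 2)]
        exact hcard
      · intro i hi
        rcases Nat.lt_or_ge (i : ℕ) m with h | h
        · exact hzero (finCongr hcast i) (by simpa using h)
        · have : finCongr hcast i = M := by
            apply Fin.ext; simp [hMdef]; omega
          simpa [Function.comp, this] using hne
    · intro v hv
      simp only [mem_coe, mem_filter, ternaryWords, mem_univ, true_and] at hv ⊢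
      obtain ⟨hcard, hzero⟩ := hv
      refine ⟨⟨?_, ?_⟩, ?_⟩
      · rw [Function.comp_def, card_filter_equiv (finCongr hcast).symm (fun j => v j = 2)]
        exact hcard
      · intro i hi
        exact hzero ((finCongr hcast).symm i) (by simp; omega)
      · have h9 : (finCongr hcast).symm M = ⟨m, by omega⟩ := by
          apply Fin.ext; simp [hMdef]
        intro hc
        apply hzero ⟨m, by omega⟩ (by simp)
        rw [← h9]; exact hc
    · intro w _; funext i; simp
    · intro v _; funext i; simp
  · -- words with w M = 0  ↔  ternaryWords m n k
    refine Finset.card_nbij' (fun w => fun t : Fin (m+n) => w (M.succAbove t))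
      (fun v => M.insertNth 0 v) ?_ ?_ ?_ ?_
    · intro w hw
      simp only [mem_coe, mem_filter, ternaryWords, mem_univ, true_and, not_not] at hw ⊢
      obtain ⟨⟨hcard, hzero⟩, h0⟩ := hw
      constructor
      · exact ((card_filter_succAbove M w (by rw [h0]; decide)).symm).trans hcard
      · intro t ht
        apply hzero
        rw [succAbove_val (m := m) (N := m+n) (by omega) t]
        simp [ht]
    · intro v hv
      simp only [mem_coe, mem_filter, ternaryWords, mem_univ, true_and, not_not] at hv ⊢
      obtain ⟨hcard, hzero⟩ := hv
      refine ⟨⟨?_, ?_⟩, ?_⟩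
      · have h2 : Fin.insertNth (α := fun _ => Fin 3) M 0 v M ≠ 2 := by
          rw [Fin.insertNth_apply_same]
          intro hc
          exact absurd (congrArg Fin.val hc) (by simp)
        have h3 := card_filter_succAbove M (Fin.insertNth (α := fun _ => Fin 3) M 0 v) h2
        simp only [Fin.insertNth_apply_succAbove] at h3
        exact h3.trans hcard
      · intro i hi
        have hne : i ≠ M := by
          intro h; rw [h] at hi; simp [hMdef] at hi
        obtain ⟨t, rfl⟩ := Fin.exists_succAbove_eq hne
        rw [Fin.insertNth_apply_succAbove]
        apply hzero
        have hv2 := succAbove_val (m := m) (N := m + n) (by omega) t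
        rw [show (⟨m, by omega⟩ : Fin (m+n+1)) = M from rfl] at hv2
        rw [hv2] at hi
        split at hi <;> omega
      · exact Fin.insertNth_apply_same M 0 _
    · intro w hw
      simp only [mem_coe, mem_filter, not_not] at hw
      have h := Fin.insertNth_self_removeNth M w
      rw [hw.2] at h
      exact h
    · intro v _; funext t; simp [Fin.insertNth_apply_succAbove]

lemma C_fwdDiff (k a : ℕ) :
    fwdDiff 1 (fun b => (C a b k : ℤ)) = fun b => (C (a+1) b k : ℤ) := by
  funext b
  have := C_rec a b k
  simp only [fwdDiff]
  push_cast [this]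
  ring

lemma C_iter (k a p : ℕ) :
    (fwdDiff 1)^[p] (fun b => (C a b k : ℤ)) = fun b => (C (a+p) b k : ℤ) := by
  induction p with
  | zero => rfl
  | succ p ih => rw [Function.iterate_succ_apply', ih]; exact C_fwdDiff k (a+p)

theorem stmt_6 (m n k p : ℕ) (hp : p ≤ m) :
    (C (m + 1) n k : ℤ) =
      ∑ i ∈ Finset.range (p + 1),
        (-1 : ℤ) ^ i * (p.choose i) * C (m + 1 - p) (n + p - i) k := by
  have key := fwdDiff_iter_eq_sum_shift (M := ℕ) (G := ℤ) (h := 1) (fun b => (C (m+1-p) b k : ℤ)) p n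
  rw [C_iter] at key
  have h1 : m + 1 - p + p = m + 1 := by omega
  rw [h1] at key
  simp only at key
  rw [key]
  rw [← Finset.sum_range_reflect]
  apply Finset.sum_congr rfl
  intro i hi
  rw [Finset.mem_range] at hi
  have hi' : i ≤ p := by omega
  rw [show p + 1 - 1 - i = p - i by omega, show p - (p - i) = i by omega,
    Nat.choose_symm hi', show (p - i) • 1 = p - i by simp,
    show n + (p - i) = n + p - i by omega, zsmul_eq_mul]
  push_cast
  ring
end

section
/- For all natural numbers m, n, k, one has C(m+1, n, k+1) = 2^{n-k-1} · binom(n, k+1) + Σ_{i=0}^{m} C(i, n, k), where the term 2^{n-k-1} · binom(n, k+1) is interpreted as 0 when k+1 > n (note binom(n,k+1) = 0 in that case). In particular, if n ≤ k then C(m+1, n, k+1) = Σ_{i=0}^{m} C(i, n, k). -/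
/-!
Splitting on the first letter, which must be `1` or `2`, gives
`C (m+1) n (k+1) = C m n (k+1) + C m n k`. Iterating this in `m` leaves
`C 0 n (k+1) + ∑ i ≤ m, C i n k`, and `C 0 n (k+1)` counts unrestricted words of length `n`
with `k+1` twos: `n.choose (k+1) * 2 ^ (n-k-1)`.
-/

open Finset

lemma card_filter_fin_succ {α : Type*} [Fintype α] {N : ℕ} (P : (Fin (N + 1) → α) → Prop)
    [DecidablePred P] :
    #{w | P w} = ∑ a, #{t : Fin N → α | P (Fin.cons a t)} := by
  simp only [card_filter]
  rw [← (Fin.consEquiv fun _ => α).sum_comp, Fintype.sum_prod_type]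
  rfl

lemma card_filter_cons_eq {α : Type*} [DecidableEq α] {N : ℕ} (a b : α) (t : Fin N → α) :
    #{j | (Fin.cons b t : Fin (N + 1) → α) j = a} = #{i | t i = a} + if b = a then 1 else 0 := by
  simp only [card_filter, Fin.sum_univ_succ, Fin.cons_zero, Fin.cons_succ]
  exact add_comm _ _

theorem card_filter_card_fiber_eq {α : Type*} [Fintype α] [DecidableEq α] (a : α) (N t : ℕ) :
    #{w : Fin N → α | #{i | w i = a} = t} = N.choose t * (Fintype.card α - 1) ^ (N - t) := by
  induction N generalizing t with
  | zero => cases t <;> simp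
  | succ N ih =>
    rw [card_filter_fin_succ, Fintype.sum_eq_add_sum_compl a]
    have hb : ∀ b ∈ ({a}ᶜ : Finset α),
        #{t' : Fin N → α | #{i | t' i = a} + (if b = a then 1 else 0) = t} =
          N.choose t * (Fintype.card α - 1) ^ (N - t) := fun b hb => by
      simp only [if_neg (by simpa using hb), add_zero, ih]
    simp only [card_filter_cons_eq, if_pos, sum_congr rfl hb, sum_const, card_compl, card_singleton,
      smul_eq_mul]
    cases t with
    | zero => simp [pow_succ']
    | succ t =>
      simp only [Nat.add_right_cancel_iff, ih, Nat.choose_succ_succ', Nat.add_sub_add_right]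
      rcases le_or_gt (t + 1) N with h | h
      · rw [show N - t = N - (t + 1) + 1 by omega, pow_succ]
        ring
      · rw [Nat.choose_eq_zero_of_lt h]
        ring

/-- `ternaryWords m n k` is `insetWords (m + n) m k`; separating the length from `m` lets the
length be rewritten on its own. -/
def insetWords (N m k : ℕ) : Finset (Fin N → Fin 3) :=
  {w | #{i | w i = 2} = k ∧ ∀ i : Fin N, (i : ℕ) < m → w i ≠ 0}

lemma card_insetWords_zero (N k : ℕ) : #(insetWords N 0 k) = N.choose k * 2 ^ (N - k) := by
  simp only [insetWords, Nat.not_lt_zero, false_implies, implies_true, and_true]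
  exact card_filter_card_fiber_eq 2 N k

lemma card_insetWords_succ_succ (N m k : ℕ) :
    #(insetWords (N + 1) (m + 1) (k + 1)) = #(insetWords N m (k + 1)) + #(insetWords N m k) := by
  have hcons (a : Fin 3) (t : Fin N → Fin 3) :
      (∀ j : Fin (N + 1), j < m + 1 → (Fin.cons a t : Fin (N + 1) → Fin 3) j ≠ 0) ↔
        a ≠ 0 ∧ ∀ i : Fin N, (i : ℕ) < m → t i ≠ 0 := by
    simp [Fin.forall_fin_succ]
  rw [insetWords, card_filter_fin_succ, Fin.sum_univ_three]
  simp only [card_filter_cons_eq, hcons]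
  simp [insetWords]

lemma C_eq_card_insetWords (m n k : ℕ) : C m n k = #(insetWords (m + n) m k) := rfl

lemma C_zero_left (n k : ℕ) : C 0 n k = n.choose k * 2 ^ (n - k) := by
  rw [C_eq_card_insetWords, zero_add, card_insetWords_zero]

lemma C_succ_succ (m n k : ℕ) : C (m + 1) n (k + 1) = C m n (k + 1) + C m n k := by
  simp only [C_eq_card_insetWords]
  rw [Nat.add_right_comm m 1 n, card_insetWords_succ_succ]

lemma C_succ_succ_eq_sum (m n k : ℕ) :
    C (m + 1) n (k + 1) = C 0 n (k + 1) + ∑ i ∈ range (m + 1), C i n k := by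
  induction m with
  | zero => rw [sum_range_one, C_succ_succ]
  | succ m ih => rw [sum_range_succ, C_succ_succ, ih, add_assoc]

theorem stmt_7 (m n k : ℕ) :
    C (m + 1) n (k + 1) =
        2 ^ (n - k - 1) * n.choose (k + 1) + ∑ i ∈ Finset.range (m + 1), C i n k ∧
      (n ≤ k → C (m + 1) n (k + 1) = ∑ i ∈ Finset.range (m + 1), C i n k) := by
  have hC : C (m + 1) n (k + 1) =
      2 ^ (n - k - 1) * n.choose (k + 1) + ∑ i ∈ range (m + 1), C i n k := by
    rw [C_succ_succ_eq_sum, C_zero_left, mul_comm, Nat.sub_sub]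
  refine ⟨hC, fun hnk => ?_⟩
  rw [hC, Nat.choose_eq_zero_of_lt (by omega), mul_zero, zero_add]
end

section
/- For all natural numbers m, n, k, one has C(m+1, n, k+1) = C(m, n, k) + C(m, n, k+1) (the Pascal-type recurrence in the parameter m). -/
open Finset

/-! Split a word of length `m + 1 + n` into its first letter and the remaining word of length
`m + n`. The first letter lies among the first `m + 1` letters, so it is `1` or `2`; a leading `2`
accounts for one of the `k + 1` twos, a leading `1` for none. -/

namespace Fin

theorem card_filter_cons_eq {N : ℕ} {α : Type*} [DecidableEq α] (a b : α) (v : Fin N → α) :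
    #{i | (cons a v : Fin (N + 1) → α) i = b} = #{i | v i = b} + if a = b then 1 else 0 := by
  simp only [card_filter, sum_univ_succ, cons_zero, cons_succ]
  ring

theorem forall_val_lt_succ_cons {N m : ℕ} {α : Type*} (P : α → Prop) (a : α) (v : Fin N → α) :
    (∀ i : Fin (N + 1), (i : ℕ) < m + 1 → P ((cons a v : Fin (N + 1) → α) i)) ↔
      P a ∧ ∀ i : Fin N, (i : ℕ) < m → P (v i) := by
  simp [forall_fin_succ]

end Fin

def prependEquiv (α : Type*) (m n : ℕ) : α × (Fin (m + n) → α) ≃ (Fin (m + 1 + n) → α) :=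
  (Fin.consEquiv fun _ => α).trans
    (Equiv.arrowCongr (finCongr (Nat.succ_add m n).symm) (Equiv.refl α))

theorem prependEquiv_mem_ternaryWords_iff (m n k : ℕ) (a : Fin 3) (v : Fin (m + n) → Fin 3) :
    prependEquiv (Fin 3) m n (a, v) ∈ ternaryWords (m + 1) n k ↔
      a ≠ 0 ∧ #{i | v i = 2} + (if a = 2 then 1 else 0) = k ∧
        ∀ i : Fin (m + n), (i : ℕ) < m → v i ≠ 0 := by
  have hcard : #{j | prependEquiv (Fin 3) m n (a, v) j = 2} =
      #{i | (Fin.cons a v : Fin (m + n + 1) → Fin 3) i = 2} :=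
    card_equiv (finCongr (Nat.succ_add m n)) (by simp [prependEquiv])
  have hzero : (∀ j : Fin (m + 1 + n), (j : ℕ) < m + 1 → prependEquiv (Fin 3) m n (a, v) j ≠ 0) ↔
      ∀ i : Fin (m + n + 1), (i : ℕ) < m + 1 → (Fin.cons a v : Fin (m + n + 1) → Fin 3) i ≠ 0 :=
    (finCongr (Nat.succ_add m n)).forall_congr (by simp [prependEquiv])
  rw [ternaryWords, mem_filter, hcard, hzero, Fin.card_filter_cons_eq,
    Fin.forall_val_lt_succ_cons (· ≠ 0)]
  simp only [mem_univ, true_and]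
  tauto

theorem C_succ_left_eq_sum (m n k : ℕ) :
    C (m + 1) n k =
      ∑ a : Fin 3, #{v | prependEquiv (Fin 3) m n (a, v) ∈ ternaryWords (m + 1) n k} := by
  calc C (m + 1) n k = #{p | prependEquiv (Fin 3) m n p ∈ ternaryWords (m + 1) n k} :=
        (card_equiv (prependEquiv (Fin 3) m n) (by simp)).symm
    _ = _ := by
        rw [card_filter, Fintype.sum_prod_type]
        simp only [card_filter]

theorem stmt_10 (m n k : ℕ) :
    C (m + 1) n (k + 1) = C m n k + C m n (k + 1) := by
  rw [C_succ_left_eq_sum, Fin.sum_univ_three, add_comm (C m n k)]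
  simp only [prependEquiv_mem_ternaryWords_iff]
  simp [C, ternaryWords]
end

section
/- For all natural numbers m, n, k with n ≤ m + k, one has C(m + k - n, n, k) = Σ_{i=0}^{m} binom(n, m - i) · binom(k + i, k). -/
open Finset

/-! A word is determined by its set `Z` of zeros, which must lie among the last `n` positions,
and its set of twos, a `k`-subset of the complement of `Z`. Grouping by `j = #Z` gives
`C m n k = ∑ j, n.choose j * (m + n - j).choose k`. For `C (m + k - n) n k` the length is
`m + k`; reflecting the index `i ↦ m - i` on the right-hand side turns it into the same sum,
up to terms that vanish because `j > n` or `m + k - j < k`. -/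

section Words

variable {α : Type*} [DecidableEq α]

def wordOfZerosTwos (Z T : Finset α) (i : α) : Fin 3 :=
  if i ∈ Z then 0 else if i ∈ T then 2 else 1

variable [Fintype α]

lemma filter_wordOfZerosTwos_eq_zero (Z T : Finset α) :
    univ.filter (wordOfZerosTwos Z T · = 0) = Z := by
  ext i
  by_cases hZ : i ∈ Z <;> by_cases hT : i ∈ T <;> simp [wordOfZerosTwos, hZ, hT]

lemma filter_wordOfZerosTwos_eq_two {Z T : Finset α} (h : Disjoint Z T) :
    univ.filter (wordOfZerosTwos Z T · = 2) = T := by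
  ext i
  have hZT : i ∈ Z → i ∉ T := fun hZ => disjoint_left.1 h hZ
  rw [mem_filter]
  unfold wordOfZerosTwos
  split_ifs <;> simp_all

lemma wordOfZerosTwos_filter_eq (w : α → Fin 3) :
    wordOfZerosTwos (univ.filter (w · = 0)) (univ.filter (w · = 2)) = w := by
  funext i
  have : w i = 0 ∨ w i = 1 ∨ w i = 2 := by omega
  rcases this with h | h | h <;> simp [wordOfZerosTwos, h]

theorem card_ternary_twos_eq_zeros_subset (S : Finset α) (k : ℕ) :
    #{w : α → Fin 3 | #{i | w i = 2} = k ∧ ∀ i, w i = 0 → i ∈ S} =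
      ∑ j ∈ range (#S + 1), (#S).choose j * (Fintype.card α - j).choose k := by
  have hbij : #{w : α → Fin 3 | #{i | w i = 2} = k ∧ ∀ i, w i = 0 → i ∈ S} =
      #(S.powerset.sigma fun Z => Zᶜ.powersetCard k) := by
    refine card_bij' (fun w _ => ⟨univ.filter (w · = 0), univ.filter (w · = 2)⟩)
      (fun p _ => wordOfZerosTwos p.1 p.2) ?_ ?_ (fun w _ => wordOfZerosTwos_filter_eq w) ?_
    · intro w hw
      simp only [mem_filter, mem_univ, true_and] at hw
      simp only [mem_sigma, mem_powerset, mem_powersetCard, subset_compl_iff_disjoint_left]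
      refine ⟨fun i hi => hw.2 i (by simpa using hi),
        disjoint_filter.2 fun i _ h0 h2 => by simp [h0] at h2, hw.1⟩
    · rintro ⟨Z, T⟩ hp
      simp only [mem_sigma, mem_powerset, mem_powersetCard, subset_compl_iff_disjoint_left] at hp
      obtain ⟨hZS, hZT, rfl⟩ := hp
      simp only [mem_filter, mem_univ, true_and, filter_wordOfZerosTwos_eq_two hZT]
      intro i hi
      apply hZS
      rw [← filter_wordOfZerosTwos_eq_zero Z T]
      simpa using hi
    · rintro ⟨Z, T⟩ hp
      simp only [mem_sigma, mem_powerset, mem_powersetCard, subset_compl_iff_disjoint_left] at hp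
      simp only [filter_wordOfZerosTwos_eq_zero, filter_wordOfZerosTwos_eq_two hp.2.1]
  rw [hbij, card_sigma]
  simp only [card_powersetCard, card_compl]
  rw [sum_powerset_apply_card (fun j => (Fintype.card α - j).choose k)]
  simp only [smul_eq_mul]

end Words

lemma card_filter_le_val_fin_add (m n : ℕ) : #{i : Fin (m + n) | m ≤ (i : ℕ)} = n := by
  have hlt := Fin.card_filter_val_lt (n := m + n) (m := m)
  have hsplit := card_filter_add_card_filter_not (s := (univ : Finset (Fin (m + n))))
    (fun i => (i : ℕ) < m)
  simp only [not_lt, card_univ, Fintype.card_fin] at hsplit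
  omega

theorem C_eq_sum_choose_mul_choose (m n k : ℕ) :
    C m n k = ∑ j ∈ range (n + 1), n.choose j * (m + n - j).choose k := by
  have hcount :=
    card_ternary_twos_eq_zeros_subset (univ.filter fun i : Fin (m + n) => m ≤ (i : ℕ)) k
  rw [card_filter_le_val_fin_add, Fintype.card_fin] at hcount
  rw [← hcount, C, ternaryWords]
  congr 1
  ext w
  simp only [mem_filter, mem_univ, true_and]
  exact and_congr_right fun _ => forall_congr' fun i => by omega

theorem sum_range_eq_sum_range_of_eq_zero {M : Type*} [AddCommMonoid M] {f : ℕ → M} {a b : ℕ}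
    (ha : ∀ j, a < j → f j = 0) (hb : ∀ j, b < j → f j = 0) :
    ∑ j ∈ range (a + 1), f j = ∑ j ∈ range (b + 1), f j := by
  have extend : ∀ a b, a ≤ b → (∀ j, a < j → f j = 0) →
      ∑ j ∈ range (a + 1), f j = ∑ j ∈ range (b + 1), f j := fun a b hab ha =>
    sum_subset (range_subset_range.2 (by omega)) fun j _ hj => ha j (by simpa using hj)
  rcases le_total a b with hab | hba
  · exact extend a b hab ha
  · exact (extend b a hba hb).symm

theorem stmt_14 (m n k : ℕ) (h : n ≤ m + k) :
    C (m + k - n) n k =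
      ∑ i ∈ Finset.range (m + 1), n.choose (m - i) * (k + i).choose k := by
  have reflect : ∑ i ∈ range (m + 1), n.choose (m - i) * (k + i).choose k =
      ∑ j ∈ range (m + 1), n.choose j * (m + k - j).choose k := by
    rw [← sum_range_reflect]
    refine sum_congr rfl fun j hj => ?_
    rw [mem_range] at hj
    congr 2 <;> omega
  rw [C_eq_sum_choose_mul_choose, Nat.sub_add_cancel h, reflect]
  refine sum_range_eq_sum_range_of_eq_zero (fun j hj => ?_) (fun j hj => ?_)
  · rw [Nat.choose_eq_zero_of_lt hj, zero_mul]
  · rcases lt_or_ge n j with hnj | hjn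
    · rw [Nat.choose_eq_zero_of_lt hnj, zero_mul]
    · rw [Nat.choose_eq_zero_of_lt (by omega : m + k - j < k), mul_zero]
end

section
/- For all natural numbers m, k with m ≤ k, the following identity of formal power series over ℤ holds: (1 - X)^m = (1 - 2X)^{k+1} · Σ_{n≥0} C(m, n + (k - m), k) · X^n. Equivalently, (1-x)^m/(1-2x)^{k+1} = Σ_{n≥0} C(m, n+k-m, k) x^n. -/
open Finset

lemma mem_tw {m n k : ℕ} {w : Fin (m+n) → Fin 3} :
    w ∈ ternaryWords m n k ↔
      (univ.filter fun i => w i = 2).card = k ∧ ∀ i : Fin (m + n), (i : ℕ) < m → w i ≠ 0 := by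
  simp [ternaryWords]

lemma fin3_cases : ∀ c : Fin 3, c ≠ 2 → c = 0 ∨ c = 1 := by decide

lemma count_snoc (N : ℕ) (w : Fin (N+1) → Fin 3) :
    (univ.filter fun i => w i = 2).card
      = (univ.filter fun i : Fin N => w i.castSucc = 2).card
        + (if w (Fin.last N) = 2 then 1 else 0) := by
  rw [Finset.card_filter, Finset.card_filter, Fin.sum_univ_castSucc]

lemma cond_snoc (m n : ℕ) (w : Fin (m+n+1) → Fin 3) :
    (∀ i : Fin (m+n+1), (i:ℕ) < m → w i ≠ 0) ↔
      (∀ i : Fin (m+n), (i:ℕ) < m → w i.castSucc ≠ 0) := by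
  constructor
  · intro h i hi; exact h i.castSucc (by simpa using hi)
  · intro h i hi
    have hlt : (i:ℕ) < m+n := by omega
    have he : i = (⟨(i:ℕ), hlt⟩ : Fin (m+n)).castSucc := by
      apply Fin.ext; rfl
    rw [he]; exact h _ hi

lemma C_succ_n (m n k : ℕ) :
    C m (n+1) (k+1) = 2 * C m n (k+1) + C m n k := by
  classical
  have hdisj : Disjoint (ternaryWords m n (k+1) ×ˢ ({0,1} : Finset (Fin 3)))
      (ternaryWords m n k ×ˢ ({2} : Finset (Fin 3))) := by
    simp only [Finset.disjoint_left, Finset.mem_product]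
    rintro ⟨v, c⟩ ⟨-, hc⟩ ⟨-, hc'⟩
    simp only [Finset.mem_insert, Finset.mem_singleton] at hc hc'
    rcases hc with rfl | rfl <;> exact absurd hc' (by decide)
  have hcard : C m (n+1) (k+1) =
      ((ternaryWords m n (k+1) ×ˢ ({0,1} : Finset (Fin 3))) ∪
        (ternaryWords m n k ×ˢ ({2} : Finset (Fin 3)))).card := by
    apply Finset.card_nbij' (fun w => (Fin.init w, w (Fin.last (m+n))))
      (fun p => Fin.snoc p.1 p.2)
    · intro w hw
      rw [Finset.mem_coe, mem_tw] at hw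
      rw [Finset.mem_coe]
      have h1 : (univ.filter fun i : Fin ((m+n)+1) => w i = 2).card = k+1 := hw.1
      have h2 : ∀ i : Fin ((m+n)+1), (i:ℕ) < m → w i ≠ 0 := hw.2
      rw [count_snoc] at h1
      rw [cond_snoc] at h2
      have h2' : ∀ i : Fin (m+n), (i:ℕ) < m → Fin.init w i ≠ 0 := by
        intro i hi; simpa [Fin.init] using h2 i hi
      simp only [Finset.mem_union, Finset.mem_product, Finset.mem_insert,
        Finset.mem_singleton]
      by_cases hl : w (Fin.last (m+n)) = 2
      · right
        refine ⟨mem_tw.mpr ⟨?_, h2'⟩, hl⟩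
        rw [if_pos hl] at h1
        refine Nat.add_right_cancel (m := 1) ?_
        convert h1 <;> simp [Fin.init]
      · left
        refine ⟨mem_tw.mpr ⟨?_, h2'⟩, fin3_cases _ hl⟩
        rw [if_neg hl] at h1
        refine Nat.add_right_cancel (m := 0) ?_
        convert h1 <;> simp [Fin.init]
    · intro p hp
      rw [Finset.mem_coe] at hp ⊢
      simp only [Finset.mem_union, Finset.mem_product, Finset.mem_insert,
        Finset.mem_singleton] at hp
      rw [mem_tw]
      constructor
      · show (univ.filter fun i : Fin ((m+n)+1) => (Fin.snoc p.1 p.2 : Fin ((m+n)+1) → Fin 3) i = 2).card = k+1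
        rw [count_snoc]
        simp only [Fin.snoc_castSucc, Fin.snoc_last]
        rcases hp with ⟨hp1, hc⟩ | ⟨hp1, hc⟩
        · have := (mem_tw.mp hp1).1
          rcases hc with h0 | h1
          · rw [h0, if_neg (by decide), this]
          · rw [h1, if_neg (by decide), this]
        · have := (mem_tw.mp hp1).1
          rw [hc, if_pos rfl, this]
      · show ∀ i : Fin ((m+n)+1), (i:ℕ) < m → (Fin.snoc p.1 p.2 : Fin ((m+n)+1) → Fin 3) i ≠ 0
        rw [cond_snoc]
        intro i hi
        rw [Fin.snoc_castSucc]
        rcases hp with ⟨hp1, -⟩ | ⟨hp1, -⟩ <;> exact (mem_tw.mp hp1).2 i hi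
    · intro w _
      exact Fin.snoc_init_self w
    · intro p _
      simp
  rw [hcard, Finset.card_union_of_disjoint hdisj, Finset.card_product,
    Finset.card_product]
  have : ({0,1} : Finset (Fin 3)).card = 2 := by decide
  rw [this]
  have : ({2} : Finset (Fin 3)).card = 1 := by decide
  rw [this]
  show _ = 2 * (ternaryWords m n (k+1)).card + (ternaryWords m n k).card
  ring

lemma C_succ_n0 (m n : ℕ) : C m (n+1) 0 = 2 * C m n 0 := by
  classical
  have hcard : C m (n+1) 0 =
      (ternaryWords m n 0 ×ˢ ({0,1} : Finset (Fin 3))).card := by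
    apply Finset.card_nbij' (fun w => (Fin.init w, w (Fin.last (m+n))))
      (fun p => Fin.snoc p.1 p.2)
    · intro w hw
      rw [Finset.mem_coe, mem_tw] at hw
      rw [Finset.mem_coe]
      have h1 : (univ.filter fun i : Fin ((m+n)+1) => w i = 2).card = 0 := hw.1
      have h2 : ∀ i : Fin ((m+n)+1), (i:ℕ) < m → w i ≠ 0 := hw.2
      rw [count_snoc] at h1
      rw [cond_snoc] at h2
      have h2' : ∀ i : Fin (m+n), (i:ℕ) < m → Fin.init w i ≠ 0 := by
        intro i hi; simpa [Fin.init] using h2 i hi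
      have hl : w (Fin.last (m+n)) ≠ 2 := by
        intro hl; rw [if_pos hl] at h1; omega
      rw [if_neg hl] at h1
      simp only [Finset.mem_product, Finset.mem_insert, Finset.mem_singleton]
      refine ⟨mem_tw.mpr ⟨by refine Nat.add_right_cancel (m := 0) ?_; convert h1 <;> simp [Fin.init], h2'⟩, fin3_cases _ hl⟩
    · intro p hp
      rw [Finset.mem_coe] at hp ⊢
      simp only [Finset.mem_product, Finset.mem_insert, Finset.mem_singleton] at hp
      rw [mem_tw]
      constructor
      · show (univ.filter fun i : Fin ((m+n)+1) => (Fin.snoc p.1 p.2 : Fin ((m+n)+1) → Fin 3) i = 2).card = 0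
        rw [count_snoc]
        simp only [Fin.snoc_castSucc, Fin.snoc_last]
        have := (mem_tw.mp hp.1).1
        rcases hp.2 with h0 | h1
        · rw [h0, if_neg (by decide), this]
        · rw [h1, if_neg (by decide), this]
      · show ∀ i : Fin ((m+n)+1), (i:ℕ) < m → (Fin.snoc p.1 p.2 : Fin ((m+n)+1) → Fin 3) i ≠ 0
        rw [cond_snoc]
        intro i hi
        rw [Fin.snoc_castSucc]
        exact (mem_tw.mp hp.1).2 i hi
    · intro w _
      exact Fin.snoc_init_self w
    · intro p _
      simp
  rw [hcard, Finset.card_product]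
  have : ({0,1} : Finset (Fin 3)).card = 2 := by decide
  rw [this]
  show _ = 2 * (ternaryWords m n 0).card
  ring

def eMN (m n : ℕ) : Fin ((m+n)+1) ≃ Fin (m+1+n) := finCongr (by omega)

lemma count_cons (m n : ℕ) (w : Fin (m+1+n) → Fin 3) :
    (univ.filter fun i => w i = 2).card
      = (if w (eMN m n 0) = 2 then 1 else 0)
        + (univ.filter fun j : Fin (m+n) => w (eMN m n j.succ) = 2).card := by
  rw [Finset.card_filter, Finset.card_filter]
  rw [← Fintype.sum_equiv (eMN m n) _ (fun i => if w i = 2 then 1 else 0) (fun _ => rfl)]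
  rw [Fin.sum_univ_succ]

lemma cond_cons (m n : ℕ) (w : Fin (m+1+n) → Fin 3) :
    (∀ i : Fin (m+1+n), (i:ℕ) < m+1 → w i ≠ 0) ↔
      (w (eMN m n 0) ≠ 0 ∧ ∀ j : Fin (m+n), (j:ℕ) < m → w (eMN m n j.succ) ≠ 0) := by
  constructor
  · intro h
    refine ⟨h _ (by simp [eMN]), fun j hj => h _ ?_⟩
    simp [eMN]
    omega
  · rintro ⟨h0, hs⟩ i hi
    have hi' : i = eMN m n ((eMN m n).symm i) := by simp
    rcases Fin.eq_zero_or_eq_succ ((eMN m n).symm i) with hz | ⟨j, hj⟩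
    · rw [hi', hz]; exact h0
    · rw [hi', hj]
      apply hs
      have hv : ((eMN m n j.succ : Fin (m+1+n)) : ℕ) = (j:ℕ)+1 := by simp [eMN]
      have hiv : (i:ℕ) = (j:ℕ)+1 := by rw [hi', hj, hv]
      omega

lemma C_succ_m (m n k : ℕ) :
    C (m+1) n (k+1) = C m n (k+1) + C m n k := by
  classical
  have hdisj : Disjoint (ternaryWords m n (k+1) ×ˢ ({1} : Finset (Fin 3)))
      (ternaryWords m n k ×ˢ ({2} : Finset (Fin 3))) := by
    simp only [Finset.disjoint_left, Finset.mem_product]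
    rintro ⟨v, c⟩ ⟨-, hc⟩ ⟨-, hc'⟩
    simp only [Finset.mem_singleton] at hc hc'
    subst hc; exact absurd hc' (by decide)
  have hcard : C (m+1) n (k+1) =
      ((ternaryWords m n (k+1) ×ˢ ({1} : Finset (Fin 3))) ∪
        (ternaryWords m n k ×ˢ ({2} : Finset (Fin 3)))).card := by
    rw [C]
    apply Finset.card_nbij' (fun w => ((fun j : Fin (m+n) => w (eMN m n j.succ)), w (eMN m n 0)))
      (fun p => fun x => (Fin.cons p.2 p.1 : Fin ((m+n)+1) → Fin 3) ((eMN m n).symm x))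
    · intro w hw
      rw [Finset.mem_coe, mem_tw] at hw
      rw [Finset.mem_coe]
      have h1 := hw.1
      have h2 := hw.2
      rw [count_cons] at h1
      rw [cond_cons] at h2
      simp only [Finset.mem_union, Finset.mem_product, Finset.mem_singleton]
      by_cases hl : w (eMN m n 0) = 2
      · right
        rw [if_pos hl] at h1
        exact ⟨mem_tw.mpr ⟨by omega, h2.2⟩, hl⟩
      · left
        rw [if_neg hl] at h1
        rcases fin3_cases _ hl with h0 | hone
        · exact absurd h0 h2.1
        · exact ⟨mem_tw.mpr ⟨by omega, h2.2⟩, hone⟩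
    · intro p hp
      rw [Finset.mem_coe] at hp ⊢
      simp only [Finset.mem_union, Finset.mem_product, Finset.mem_singleton] at hp
      rw [mem_tw]
      constructor
      · rw [count_cons]
        simp only [Equiv.symm_apply_apply, Fin.cons_zero, Fin.cons_succ]
        rcases hp with ⟨hp1, hc⟩ | ⟨hp1, hc⟩
        · rw [hc, if_neg (by decide), (mem_tw.mp hp1).1]; omega
        · rw [hc, if_pos rfl, (mem_tw.mp hp1).1]; omega
      · rw [cond_cons]
        simp only [Equiv.symm_apply_apply, Fin.cons_zero, Fin.cons_succ]
        rcases hp with ⟨hp1, hc⟩ | ⟨hp1, hc⟩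
        · exact ⟨by rw [hc]; decide, (mem_tw.mp hp1).2⟩
        · exact ⟨by rw [hc]; decide, (mem_tw.mp hp1).2⟩
    · intro w _
      funext x
      have hx : x = eMN m n ((eMN m n).symm x) := by simp
      rw [hx]
      induction ((eMN m n).symm x) using Fin.cases with
      | zero => simp
      | succ j => simp
    · intro p _
      apply Prod.ext
      · funext j; simp
      · simp
  rw [hcard, Finset.card_union_of_disjoint hdisj, Finset.card_product,
    Finset.card_product]
  simp [C]

lemma C_all_two (m n : ℕ) : C m n (m + n) = 1 := by
  rw [C]
  have : ternaryWords m n (m+n) = {fun _ => 2} := by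
    ext w
    rw [mem_tw, Finset.mem_singleton]
    constructor
    · rintro ⟨h1, -⟩
      have hu : (univ.filter fun i => w i = 2) = univ :=
        Finset.eq_univ_of_card _ (by simpa using h1)
      funext i
      have := Finset.mem_filter.mp (hu ▸ Finset.mem_univ i)
      exact this.2
    · rintro rfl
      refine ⟨by simp, fun i _ => by simp⟩
  simp [this]

open PowerSeries

lemma coeff_osm (f : PowerSeries ℤ) (n : ℕ) :
    (coeff (n+1)) ((1 - 2*X) * f) = coeff (n+1) f - 2 * coeff n f := by
  have : (1 - 2*X) * f = f - 2 * (X * f) := by ring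
  rw [this, map_sub]
  have h2 : (2 : PowerSeries ℤ) = PowerSeries.C 2 := by simp
  rw [h2, PowerSeries.coeff_C_mul, coeff_succ_X_mul]

lemma coeff_osm0 (f : PowerSeries ℤ) :
    (coeff 0) ((1 - 2*X) * f) = coeff 0 f := by
  have : (1 - 2*X) * f = f - 2 * (X * f) := by ring
  rw [this, map_sub]
  have h2 : (2 : PowerSeries ℤ) = PowerSeries.C 2 := by simp
  rw [h2, PowerSeries.coeff_C_mul, coeff_zero_X_mul, mul_zero, sub_zero]

lemma base (k : ℕ) :
    (1 - 2*X : PowerSeries ℤ)^(k+1) * PowerSeries.mk (fun n => (C 0 (n+k) k : ℤ)) = 1 := by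
  induction k with
  | zero =>
    rw [pow_one]
    ext n
    cases n with
    | zero =>
      rw [coeff_osm0, coeff_mk]
      simpa using congrArg (Nat.cast : ℕ → ℤ) (C_all_two 0 0)
    | succ n =>
      rw [coeff_osm, coeff_mk, coeff_mk]
      have := C_succ_n0 0 n
      have hc : (coeff (n+1)) (1 : PowerSeries ℤ) = 0 := by
        rw [PowerSeries.coeff_one]; simp
      rw [hc]
      push_cast [this]
      ring
  | succ k ih =>
    have key : (1 - 2*X : PowerSeries ℤ) * PowerSeries.mk (fun n => (C 0 (n+(k+1)) (k+1) : ℤ))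
        = PowerSeries.mk (fun n => (C 0 (n+k) k : ℤ)) := by
      ext n
      cases n with
      | zero =>
        rw [coeff_osm0, coeff_mk, coeff_mk]
        have h1 : C 0 (0+(k+1)) (k+1) = 1 := by
          have := C_all_two 0 (k+1); simpa using this
        have h2 : C 0 (0+k) k = 1 := by
          have := C_all_two 0 k; simpa using this
        rw [h1, h2]
      | succ n =>
        rw [coeff_osm, coeff_mk, coeff_mk, coeff_mk]
        have e1 : n+1+(k+1) = (n+k+1)+1 := by omega
        have e2 : n+(k+1) = n+k+1 := by omega
        have e3 : n+1+k = n+k+1 := by omega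
        rw [e1, e2, e3]
        have := C_succ_n 0 (n+k+1) k
        push_cast [this]
        ring
    calc (1 - 2*X : PowerSeries ℤ)^(k+2) * PowerSeries.mk (fun n => (C 0 (n+(k+1)) (k+1) : ℤ))
        = (1 - 2*X)^(k+1) * ((1 - 2*X) * PowerSeries.mk (fun n => (C 0 (n+(k+1)) (k+1) : ℤ))) := by ring
      _ = 1 := by rw [key]; exact ih

theorem stmt_16 (m k : ℕ) (h : m ≤ k) :
    (1 - PowerSeries.X : PowerSeries ℤ) ^ m =
      (1 - 2 * PowerSeries.X) ^ (k + 1) *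
        PowerSeries.mk (fun n => (C m (n + (k - m)) k : ℤ)) := by
  induction m generalizing k with
  | zero =>
    simp only [pow_zero, Nat.sub_zero]
    exact (base k).symm
  | succ m ih =>
    have hk1 : 1 ≤ k := le_trans (Nat.succ_le_succ (Nat.zero_le m)) h
    have hm : m ≤ k - 1 := by omega
    have hmk : m ≤ k := by omega
    have S : PowerSeries.mk (fun n => (C (m+1) (n+(k-(m+1))) k : ℤ))
        = X * PowerSeries.mk (fun n => (C m (n+(k-m)) k : ℤ))
          + PowerSeries.mk (fun n => (C m (n+((k-1)-m)) (k-1) : ℤ)) := by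
      ext n
      cases n with
      | zero =>
        rw [map_add, coeff_zero_X_mul, coeff_mk, coeff_mk]
        have e1 : 0+(k-(m+1)) = k-(m+1) := by omega
        have h1 : C (m+1) (k-(m+1)) k = 1 := by
          have := C_all_two (m+1) (k-(m+1))
          rwa [show (m+1)+(k-(m+1)) = k by omega] at this
        have h2 : C m (0+((k-1)-m)) (k-1) = 1 := by
          rw [show (0:ℕ)+((k-1)-m) = (k-1)-m from by omega]
          have := C_all_two m ((k-1)-m)
          rwa [show m+((k-1)-m) = k-1 by omega] at this
        rw [e1, h1, h2, zero_add]
      | succ n =>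
        rw [map_add, coeff_succ_X_mul, coeff_mk, coeff_mk, coeff_mk]
        have e1 : n+1+(k-(m+1)) = n+(k-m) := by omega
        have e2 : n+1+((k-1)-m) = n+(k-m) := by omega
        rw [e1, e2]
        have := C_succ_m m (n+(k-m)) (k-1)
        rw [show (k-1)+1 = k by omega] at this
        push_cast [this]
        ring
    rw [S]
    have hpow : (1 - 2*X : PowerSeries ℤ)^(k+1) = (1-2*X) * (1-2*X)^((k-1)+1) := by
      rw [← pow_succ']
      congr 1
      omega
    have ih1 := ih k hmk
    have ih2 := ih (k-1) hm
    calc (1 - X : PowerSeries ℤ)^(m+1)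
        = X * (1-X)^m + (1-2*X) * (1-X)^m := by ring
      _ = X * ((1 - 2*X)^(k+1) * PowerSeries.mk (fun n => (C m (n+(k-m)) k : ℤ)))
          + (1-2*X) * ((1 - 2*X)^((k-1)+1) * PowerSeries.mk (fun n => (C m (n+((k-1)-m)) (k-1) : ℤ))) := by
          rw [← ih1, ← ih2]
      _ = (1 - 2*X)^(k+1) *
            (X * PowerSeries.mk (fun n => (C m (n+(k-m)) k : ℤ))
              + PowerSeries.mk (fun n => (C m (n+((k-1)-m)) (k-1) : ℤ))) := by
          rw [hpow]; ring
end
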